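/- arXiv:1908.00260 — 4 statements merged into one kernel-verified Lean document; each statement's English description precedes it below -/
import Mathlib

section
/- Let p > 1, λ₁, λ₂, λ₃ > 0, t_k < t̂_k, and let ξ, d : [t_k, t̂_k] → ℝ^n be continuous with ξ differentiable. Define ε(t) = ξ(t_k) - ξ(t) and suppose ‖ξ'(t)‖ ≤ λ₁‖ξ(t)‖ + λ₂‖ε(t)‖ + λ₃‖d(t)‖ on [t_k, t̂_k]. Let τ̂ = t̂_k - t_k, a = λ₁^p ψ(τ̂, λ₂), b = λ₃^p ψ(τ̂, λ₂), where ψ(τ̂, λ₂) = (2^{2p}(p-1)^{p-1}/(λ₂^p p^p)) (e^{λ₂ p τ̂/(2(p-1))} - 1)^{p-1} (e^{λ₂ p τ̂/2} - 1). Then ∫_{t_k}^{t̂_k} ‖ε(τ)‖^p dτ ≤ a ∫_{t_k}^{t̂_k} ‖ξ(τ)‖^p dτ + b ∫_{t_k}^{t̂_k} ‖d(τ)‖^p dτ. -/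
/-!
Write `ε t = ξ tk - ξ t` and `g = λ₁‖ξ‖ + λ₃‖d‖`, so that `‖ε'‖ ≤ λ₂‖ε‖ + g`. Grönwall's
inequality gives `‖ε t‖ ≤ ∫_{tk}^t e^{λ₂(t-s)} g(s) ds`. Splitting the kernel as
`e^{λ₂(t-s)/2} e^{λ₂(t-s)/2}` and applying Hölder's inequality with exponents `p` and
`q = p/(p-1)` gives
  `‖ε t‖^p ≤ A^{p-1} ∫_{tk}^t e^{λ₂p(t-s)/2} g(s)^p ds ≤ A^{p-1} e^{λ₂p(t-tk)/2} ∫_{tk}^{t̂k} g^p`,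
where `A = ∫_0^τ̂ e^{λ₂qs/2} ds`. Integrating over `t` contributes `∫_0^τ̂ e^{λ₂ps/2} ds`, and
`(x + y)^p ≤ 2^p (x^p + y^p)` splits `∫ g^p`; evaluating the two exponential integrals,
`2^p A^{p-1} ∫_0^τ̂ e^{λ₂ps/2} ds` is exactly `ψ(τ̂, λ₂)`.
-/

open Set intervalIntegral MeasureTheory Real

lemma integral_exp_mul_zero (c τ : ℝ) (hc : c ≠ 0) :
    ∫ x in (0 : ℝ)..τ, exp (c * x) = (exp (c * τ) - 1) / c := by
  rw [integral_comp_mul_left (fun x => exp x) hc, integral_exp, mul_zero, exp_zero,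
    smul_eq_mul, inv_mul_eq_div]

lemma integral_exp_mul_sub_left (c a t : ℝ) (hc : c ≠ 0) :
    ∫ s in a..t, exp (c * (t - s)) = (exp (c * (t - a)) - 1) / c := by
  rw [integral_comp_sub_left (fun x => exp (c * x)), sub_self, integral_exp_mul_zero c _ hc]

lemma integral_exp_mul_sub_right (c a b : ℝ) (hc : c ≠ 0) :
    ∫ t in a..b, exp (c * (t - a)) = (exp (c * (b - a)) - 1) / c := by
  rw [integral_comp_sub_right (fun x => exp (c * x)), sub_self, integral_exp_mul_zero c _ hc]

lemma exp_mul_sub_one_div_nonneg {c τ : ℝ} (hc : 0 ≤ c) (hτ : 0 ≤ τ) :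
    0 ≤ (exp (c * τ) - 1) / c :=
  div_nonneg (sub_nonneg.2 (one_le_exp (mul_nonneg hc hτ))) hc

section
variable {E : Type*} [NormedAddCommGroup E] [NormedSpace ℝ E] {a b x : ℝ}

lemma continuousOn_primitive_of_continuousOn {F : ℝ → E} (hab : a ≤ b)
    (hF : ContinuousOn F (Icc a b)) : ContinuousOn (fun t => ∫ s in a..t, F s) (Icc a b) := by
  simpa [uIcc_of_le hab] using
    continuousOn_primitive_interval' (hF.intervalIntegrable_of_Icc hab) left_mem_uIcc

lemma hasDerivWithinAt_Ici_primitive_of_continuousOn [CompleteSpace E] {F : ℝ → E}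
    (hF : ContinuousOn F (Icc a b)) (hx : x ∈ Ico a b) :
    HasDerivWithinAt (fun t => ∫ s in a..t, F s) (F x) (Ici x) x := by
  have : Fact (x ∈ Icc a b) := ⟨Ico_subset_Icc_self hx⟩
  refine (integral_hasDerivWithinAt_right (s := Icc a b) (t := Icc a b) ?_
    (hF.stronglyMeasurableAtFilter_nhdsWithin measurableSet_Icc x)
    (hF.continuousWithinAt (Ico_subset_Icc_self hx))).mono_of_mem_nhdsWithin
    (Icc_mem_nhdsGE_of_mem hx)
  exact (hF.mono (Icc_subset_Icc_right hx.2.le)).intervalIntegrable_of_Icc hx.1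

lemma norm_image_sub_le_integral_of_norm_deriv_right_le {f f' : ℝ → E} {B : ℝ → ℝ}
    (hab : a ≤ b) (hf : ContinuousOn f (Icc a b))
    (hf' : ∀ x ∈ Ico a b, HasDerivWithinAt f (f' x) (Ici x) x) (hB : ContinuousOn B (Icc a b))
    (bound : ∀ x ∈ Ico a b, ‖f' x‖ ≤ B x) :
    ∀ t ∈ Icc a b, ‖f t - f a‖ ≤ ∫ s in a..t, B s :=
  image_norm_le_of_norm_deriv_right_le_deriv_boundary' (hf.sub continuousOn_const)
    (fun x hx => (hf' x hx).sub_const (f a)) (by simp)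
    (continuousOn_primitive_of_continuousOn hab hB)
    (fun _ hx => hasDerivWithinAt_Ici_primitive_of_continuousOn hB hx) bound
end

lemma le_integral_exp_mul_of_le_integral {K a b : ℝ} {ρ g : ℝ → ℝ} (hK : 0 ≤ K) (hab : a ≤ b)
    (hρ : ContinuousOn ρ (Icc a b)) (hg : ContinuousOn g (Icc a b))
    (h : ∀ t ∈ Icc a b, ρ t ≤ ∫ s in a..t, (K * ρ s + g s)) :
    ∀ t ∈ Icc a b, ρ t ≤ ∫ s in a..t, exp (K * (t - s)) * g s := by
  set u := fun t => ∫ s in a..t, (K * ρ s + g s)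
  have hu : ContinuousOn (fun s => K * ρ s + g s) (Icc a b) := (continuousOn_const.mul hρ).add hg
  have hw : ContinuousOn (fun s => exp (-K * s) * g s) (Icc a b) := by fun_prop
  -- `exp (-K t) * u t` and the primitive of `exp (-K s) * g s` vanish at `a`, and `ρ ≤ u` makes
  -- the right derivative of the former the smaller one
  have hcomp := image_le_of_deriv_right_le_deriv_boundary (a := a) (b := b)
    (f := fun t => exp (-K * t) * u t)
    (f' := fun x => exp (-K * x) * -K * u x + exp (-K * x) * (K * ρ x + g x))
    ((by fun_prop : Continuous fun t => exp (-K * t)).continuousOn.mul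
      (continuousOn_primitive_of_continuousOn hab hu))
    (fun x hx => by
      have hexp : HasDerivAt (fun t => exp (-K * t)) (exp (-K * x) * -K) x := by
        simpa using ((hasDerivAt_id x).const_mul (-K)).exp
      exact hexp.hasDerivWithinAt.mul (hasDerivWithinAt_Ici_primitive_of_continuousOn hu hx))
    (by simp [u]) (continuousOn_primitive_of_continuousOn hab hw)
    (fun _ hx => hasDerivWithinAt_Ici_primitive_of_continuousOn hw hx)
    (fun x hx => by
      have := h x (Ico_subset_Icc_self hx)
      have : 0 ≤ K * exp (-K * x) := by positivity
      nlinarith)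
  intro t ht
  calc ρ t ≤ u t := h t ht
    _ = exp (K * t) * (exp (-K * t) * u t) := by rw [← mul_assoc, ← exp_add]; simp
    _ ≤ exp (K * t) * ∫ s in a..t, exp (-K * s) * g s := by gcongr; exact hcomp ht
    _ = ∫ s in a..t, exp (K * (t - s)) * g s := by
      rw [← intervalIntegral.integral_const_mul]
      congr 1 with s
      rw [← mul_assoc, ← exp_add]; ring_nf

lemma ContinuousOn.memLp_restrict_Icc {f : ℝ → ℝ} {a b : ℝ} (hf : ContinuousOn f (Icc a b))
    (p : ENNReal) : MemLp f p (volume.restrict (Icc a b)) := by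
  obtain ⟨C, hC⟩ := isCompact_Icc.exists_bound_of_continuousOn hf
  exact MemLp.of_bound (hf.aestronglyMeasurable measurableSet_Icc) C
    ((ae_restrict_iff' measurableSet_Icc).2 (ae_of_all _ hC))

lemma rpow_integral_mul_le {p q a b : ℝ} {f g : ℝ → ℝ} (hpq : p.HolderConjugate q) (hab : a ≤ b)
    (hf : ContinuousOn f (Icc a b)) (hg : ContinuousOn g (Icc a b))
    (hf0 : ∀ x ∈ Icc a b, 0 ≤ f x) (hg0 : ∀ x ∈ Icc a b, 0 ≤ g x) :
    (∫ x in a..b, f x * g x) ^ p ≤ (∫ x in a..b, f x ^ p) * (∫ x in a..b, g x ^ q) ^ (p - 1) := by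
  simp only [integral_of_le hab, ← integral_Icc_eq_integral_Ioc]
  have hholder := integral_mul_le_Lp_mul_Lq_of_nonneg hpq
    ((ae_restrict_iff' measurableSet_Icc).2 (ae_of_all _ hf0))
    ((ae_restrict_iff' measurableSet_Icc).2 (ae_of_all _ hg0))
    (hf.memLp_restrict_Icc _) (hg.memLp_restrict_Icc _)
  have hF : 0 ≤ ∫ x in Icc a b, f x ^ p := setIntegral_nonneg measurableSet_Icc
    fun x hx => rpow_nonneg (hf0 x hx) p
  have hG : 0 ≤ ∫ x in Icc a b, g x ^ q := setIntegral_nonneg measurableSet_Icc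
    fun x hx => rpow_nonneg (hg0 x hx) q
  have hFG : 0 ≤ ∫ x in Icc a b, f x * g x := setIntegral_nonneg measurableSet_Icc
    fun x hx => mul_nonneg (hf0 x hx) (hg0 x hx)
  calc (∫ x in Icc a b, f x * g x) ^ p
      ≤ ((∫ x in Icc a b, f x ^ p) ^ (1 / p) * (∫ x in Icc a b, g x ^ q) ^ (1 / q)) ^ p := by
        gcongr; exact hpq.nonneg
    _ = _ := by
      rw [mul_rpow (by positivity) (by positivity), ← rpow_mul hF, ← rpow_mul hG,
        one_div_mul_cancel hpq.ne_zero, rpow_one, one_div_mul_eq_div, hpq.div_conj_eq_sub_one]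

lemma rpow_integral_exp_mul_sub_mul_le {K p a t : ℝ} {g : ℝ → ℝ} (hK : 0 < K) (hp : 1 < p)
    (hat : a ≤ t) (hg : ContinuousOn g (Icc a t)) (hg0 : ∀ s ∈ Icc a t, 0 ≤ g s) :
    (∫ s in a..t, exp (K * (t - s)) * g s) ^ p ≤
      (∫ s in a..t, exp (K * p / 2 * (t - s)) * g s ^ p) *
        ((exp (K * p / (2 * (p - 1)) * (t - a)) - 1) / (K * p / (2 * (p - 1)))) ^ (p - 1) := by
  have hpq : p.HolderConjugate (p / (p - 1)) := (holderConjugate_iff_eq_conjExponent hp).2 rfl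
  have hp1 : p - 1 ≠ 0 := hpq.sub_one_ne_zero
  have hholder := rpow_integral_mul_le hpq hat
    (f := fun s => exp (K * (t - s) / 2) * g s) (g := fun s => exp (K * (t - s) / 2))
    (by fun_prop) (by fun_prop) (fun s hs => mul_nonneg (exp_pos _).le (hg0 s hs))
    (fun s _ => (exp_pos _).le)
  calc (∫ s in a..t, exp (K * (t - s)) * g s) ^ p
      = (∫ s in a..t, exp (K * (t - s) / 2) * g s * exp (K * (t - s) / 2)) ^ p := by
        congr 1
        refine integral_congr fun s _ => ?_
        rw [mul_right_comm, ← exp_add, add_halves]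
    _ ≤ _ := hholder
    _ = _ := by
      have hf : EqOn (fun s => (exp (K * (t - s) / 2) * g s) ^ p)
          (fun s => exp (K * p / 2 * (t - s)) * g s ^ p) (uIcc a t) := fun s hs => by
        dsimp only
        rw [mul_rpow (exp_pos _).le (hg0 s (uIcc_of_le hat ▸ hs)), ← exp_mul]
        ring_nf
      have hk : EqOn (fun s => exp (K * (t - s) / 2) ^ (p / (p - 1)))
          (fun s => exp (K * p / (2 * (p - 1)) * (t - s))) (uIcc a t) := fun s _ => by
        dsimp only
        rw [← exp_mul]
        congr 1
        field_simp
      rw [integral_congr hf, integral_congr hk, integral_exp_mul_sub_left _ a t (by positivity)]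

lemma integral_exp_mul_sub_mul_le {β a b t : ℝ} {h : ℝ → ℝ} (hβ : 0 ≤ β)
    (hh : ContinuousOn h (Icc a b)) (hh0 : ∀ s ∈ Icc a b, 0 ≤ h s) (ht : t ∈ Icc a b) :
    ∫ s in a..t, exp (β * (t - s)) * h s ≤ exp (β * (t - a)) * ∫ s in a..b, h s := by
  have hht : ContinuousOn h (Icc a t) := hh.mono (Icc_subset_Icc_right ht.2)
  calc ∫ s in a..t, exp (β * (t - s)) * h s
      ≤ ∫ s in a..t, exp (β * (t - a)) * h s := by
        refine integral_mono_on ht.1 ?_ ?_ fun s hs => ?_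
        · exact (ContinuousOn.mul (by fun_prop) hht).intervalIntegrable_of_Icc ht.1
        · exact (continuousOn_const.mul hht).intervalIntegrable_of_Icc ht.1
        · gcongr
          · exact hh0 s ⟨hs.1, hs.2.trans ht.2⟩
          · exact hs.1
    _ = exp (β * (t - a)) * ∫ s in a..t, h s := integral_const_mul _ _
    _ ≤ exp (β * (t - a)) * ∫ s in a..b, h s := by
        gcongr
        exact integral_mono_interval le_rfl ht.1 ht.2
          ((ae_restrict_iff' measurableSet_Ioc).2
            (ae_of_all _ fun s hs => hh0 s (Ioc_subset_Icc_self hs)))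
          (hh.intervalIntegrable_of_Icc (ht.1.trans ht.2))

section
variable {E : Type*} [NormedAddCommGroup E] [NormedSpace ℝ E] {f f' : ℝ → E} {g : ℝ → ℝ}
  {K a b : ℝ}

lemma norm_sub_le_integral_exp_mul_of_norm_deriv_le (hK : 0 ≤ K) (hab : a ≤ b)
    (hf : ContinuousOn f (Icc a b)) (hf' : ∀ x ∈ Ico a b, HasDerivWithinAt f (f' x) (Ici x) x)
    (hg : ContinuousOn g (Icc a b)) (bound : ∀ x ∈ Ico a b, ‖f' x‖ ≤ K * ‖f a - f x‖ + g x) :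
    ∀ t ∈ Icc a b, ‖f a - f t‖ ≤ ∫ s in a..t, exp (K * (t - s)) * g s := by
  have hρ : ContinuousOn (fun t => ‖f a - f t‖) (Icc a b) := (continuousOn_const.sub hf).norm
  refine le_integral_exp_mul_of_le_integral hK hab hρ hg fun t ht => ?_
  rw [norm_sub_rev]
  exact norm_image_sub_le_integral_of_norm_deriv_right_le hab hf hf'
    ((continuousOn_const.mul hρ).add hg) bound t ht

lemma integral_norm_sub_rpow_le {p : ℝ} (hK : 0 < K) (hp : 1 < p) (hab : a ≤ b)
    (hf : ContinuousOn f (Icc a b)) (hf' : ∀ x ∈ Ico a b, HasDerivWithinAt f (f' x) (Ici x) x)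
    (hg : ContinuousOn g (Icc a b)) (hg0 : ∀ x ∈ Icc a b, 0 ≤ g x)
    (bound : ∀ x ∈ Ico a b, ‖f' x‖ ≤ K * ‖f a - f x‖ + g x) :
    ∫ t in a..b, ‖f a - f t‖ ^ p ≤
      ((exp (K * p / (2 * (p - 1)) * (b - a)) - 1) / (K * p / (2 * (p - 1)))) ^ (p - 1) *
        ((exp (K * p / 2 * (b - a)) - 1) / (K * p / 2)) * ∫ t in a..b, g t ^ p := by
  set γ := K * p / (2 * (p - 1))
  set β := K * p / 2
  have hp0 : 0 < p := by linarith
  have hγ : 0 < γ := div_pos (by positivity) (by linarith)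
  have hβ : 0 < β := by positivity
  have hgp : ContinuousOn (fun t => g t ^ p) (Icc a b) := hg.rpow_const fun _ _ => Or.inr hp0.le
  have hkernel_nonneg : ∀ t ∈ Icc a b, 0 ≤ (exp (γ * (t - a)) - 1) / γ := fun t ht =>
    exp_mul_sub_one_div_nonneg hγ.le (sub_nonneg.2 ht.1)
  set C := ((exp (γ * (b - a)) - 1) / γ) ^ (p - 1) * ∫ t in a..b, g t ^ p
  have hpointwise : ∀ t ∈ Icc a b, ‖f a - f t‖ ^ p ≤ exp (β * (t - a)) * C := fun t ht => calc
    ‖f a - f t‖ ^ p ≤ (∫ s in a..t, exp (K * (t - s)) * g s) ^ p := by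
        gcongr
        exact norm_sub_le_integral_exp_mul_of_norm_deriv_le hK.le hab hf hf' hg bound t ht
    _ ≤ (∫ s in a..t, exp (β * (t - s)) * g s ^ p) * ((exp (γ * (t - a)) - 1) / γ) ^ (p - 1) :=
        rpow_integral_exp_mul_sub_mul_le hK hp ht.1 (hg.mono (Icc_subset_Icc_right ht.2))
          fun s hs => hg0 s ⟨hs.1, hs.2.trans ht.2⟩
    _ ≤ (exp (β * (t - a)) * ∫ s in a..b, g s ^ p) * ((exp (γ * (b - a)) - 1) / γ) ^ (p - 1) := by
        refine mul_le_mul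
          (integral_exp_mul_sub_mul_le hβ.le hgp (fun s hs => rpow_nonneg (hg0 s hs) p) ht)
          (rpow_le_rpow (hkernel_nonneg t ht) (by gcongr; exact ht.2) (by linarith))
          (rpow_nonneg (hkernel_nonneg t ht) _)
          (mul_nonneg (exp_pos _).le (integral_nonneg hab fun s hs => rpow_nonneg (hg0 s hs) p))
    _ = exp (β * (t - a)) * C := by ring
  calc ∫ t in a..b, ‖f a - f t‖ ^ p ≤ ∫ t in a..b, exp (β * (t - a)) * C :=
        integral_mono_on hab (((continuousOn_const.sub hf).norm.rpow_const
          fun _ _ => Or.inr hp0.le).intervalIntegrable_of_Icc hab)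
          ((by fun_prop : Continuous fun t => exp (β * (t - a)) * C).intervalIntegrable a b)
          hpointwise
    _ = _ := by
      rw [intervalIntegral.integral_mul_const, integral_exp_mul_sub_right β a b hβ.ne']
      ring
end

lemma Real.add_rpow_le_two_rpow_mul_rpow_add_rpow {a b p : ℝ} (ha : 0 ≤ a) (hb : 0 ≤ b)
    (hp : 0 ≤ p) :
    (a + b) ^ p ≤ 2 ^ p * (a ^ p + b ^ p) := calc
  (a + b) ^ p ≤ (2 * max a b) ^ p := by rw [two_mul]; gcongr <;> simp
  _ = 2 ^ p * max a b ^ p := mul_rpow zero_le_two (le_max_of_le_left ha)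
  _ ≤ 2 ^ p * (a ^ p + b ^ p) := by
    gcongr
    rcases max_choice a b with h | h <;> rw [h] <;>
      linarith [rpow_nonneg ha p, rpow_nonneg hb p]

lemma integral_mul_add_mul_rpow_le {p c₁ c₂ a b : ℝ} {u v : ℝ → ℝ} (hp : 0 ≤ p) (hab : a ≤ b)
    (hc₁ : 0 ≤ c₁) (hc₂ : 0 ≤ c₂) (hu : ContinuousOn u (Icc a b)) (hv : ContinuousOn v (Icc a b))
    (hu0 : ∀ x ∈ Icc a b, 0 ≤ u x) (hv0 : ∀ x ∈ Icc a b, 0 ≤ v x) :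
    ∫ x in a..b, (c₁ * u x + c₂ * v x) ^ p ≤
      2 ^ p * (c₁ ^ p * (∫ x in a..b, u x ^ p) + c₂ ^ p * ∫ x in a..b, v x ^ p) := by
  have hup : IntervalIntegrable (fun x => u x ^ p) volume a b :=
    (hu.rpow_const fun _ _ => Or.inr hp).intervalIntegrable_of_Icc hab
  have hvp : IntervalIntegrable (fun x => v x ^ p) volume a b :=
    (hv.rpow_const fun _ _ => Or.inr hp).intervalIntegrable_of_Icc hab
  calc ∫ x in a..b, (c₁ * u x + c₂ * v x) ^ p
      ≤ ∫ x in a..b, 2 ^ p * (c₁ ^ p * u x ^ p + c₂ ^ p * v x ^ p) := by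
        refine integral_mono_on hab ?_ (((hup.const_mul _).add (hvp.const_mul _)).const_mul _)
          fun x hx => ?_
        · exact ((ContinuousOn.add (by fun_prop) (by fun_prop)).rpow_const
            fun _ _ => Or.inr hp).intervalIntegrable_of_Icc hab
        · rw [← mul_rpow hc₁ (hu0 x hx), ← mul_rpow hc₂ (hv0 x hx)]
          exact add_rpow_le_two_rpow_mul_rpow_add_rpow (mul_nonneg hc₁ (hu0 x hx))
            (mul_nonneg hc₂ (hv0 x hx)) hp
    _ = _ := by
      rw [intervalIntegral.integral_const_mul, integral_add (hup.const_mul _) (hvp.const_mul _),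
        intervalIntegral.integral_const_mul, intervalIntegral.integral_const_mul]

lemma two_rpow_mul_exp_integrals_eq {p l τ : ℝ} (hp : 1 < p) (hl : 0 < l) (hτ : 0 ≤ τ) :
    2 ^ p * ((exp (l * p / (2 * (p - 1)) * τ) - 1) / (l * p / (2 * (p - 1)))) ^ (p - 1) *
        ((exp (l * p / 2 * τ) - 1) / (l * p / 2)) =
      2 ^ (2 * p) * (p - 1) ^ (p - 1) / (l ^ p * p ^ p) *
        (exp (l * p * τ / (2 * (p - 1))) - 1) ^ (p - 1) * (exp (l * p * τ / 2) - 1) := by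
  have hp0 : 0 < p := by linarith
  have hp1 : 0 < p - 1 := by linarith
  have hX : 0 ≤ exp (l * p * τ / (2 * (p - 1))) - 1 := by
    rw [sub_nonneg]; exact one_le_exp (by positivity)
  have hsplit : ∀ x : ℝ, 0 < x → x ^ p = x ^ (p - 1) * x := fun x hx => by
    rw [← rpow_add_one hx.ne', sub_add_cancel]
  have h4 : (2 : ℝ) ^ (2 * p) = 2 ^ p * 2 ^ (p - 1) * 2 := by
    rw [mul_assoc, ← hsplit 2 two_pos, ← rpow_add two_pos, two_mul]
  rw [div_mul_eq_mul_div, div_mul_eq_mul_div, div_rpow hX (by positivity),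
    div_rpow (by positivity) (by positivity), mul_rpow (by positivity) hp1.le,
    mul_rpow hl.le hp0.le, h4, hsplit l hl, hsplit p hp0]
  have : (0 : ℝ) < 2 ^ (p - 1) := by positivity
  have : 0 < l ^ (p - 1) := by positivity
  have : 0 < p ^ (p - 1) := by positivity
  have : 0 < (p - 1) ^ (p - 1) := by positivity
  field_simp

/-- Lemma 5: the accumulated `p`-th power of the sampling error `ε(t) = ξ(t_k) - ξ(t)`
over one inter-sample interval is bounded by `a ∫‖ξ‖^p + b ∫‖d‖^p` with
`a = λ₁^p ψ(τ̂, λ₂)`, `b = λ₃^p ψ(τ̂, λ₂)`, `τ̂ = t̂_k - t_k`. -/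
theorem sampling_error_accumulated_bound (n : ℕ) (p l₁ l₂ l₃ tk tkhat : ℝ)
    (hp : 1 < p) (h₁ : 0 < l₁) (h₂ : 0 < l₂) (h₃ : 0 < l₃) (ht : tk < tkhat)
    (ξ ξ' d : ℝ → EuclideanSpace ℝ (Fin n))
    (hd : ContinuousOn d (Icc tk tkhat))
    (hξ : ∀ t ∈ Icc tk tkhat, HasDerivAt ξ (ξ' t) t)
    (hb : ∀ t ∈ Icc tk tkhat,
      ‖ξ' t‖ ≤ l₁ * ‖ξ t‖ + l₂ * ‖ξ tk - ξ t‖ + l₃ * ‖d t‖) :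
    (∫ τ in tk..tkhat, ‖ξ tk - ξ τ‖ ^ p) ≤
      l₁ ^ p * ((2:ℝ) ^ (2 * p) * (p - 1) ^ (p - 1) / (l₂ ^ p * p ^ p) *
          (Real.exp (l₂ * p * (tkhat - tk) / (2 * (p - 1))) - 1) ^ (p - 1) *
          (Real.exp (l₂ * p * (tkhat - tk) / 2) - 1)) *
        (∫ τ in tk..tkhat, ‖ξ τ‖ ^ p) +
      l₃ ^ p * ((2:ℝ) ^ (2 * p) * (p - 1) ^ (p - 1) / (l₂ ^ p * p ^ p) *
          (Real.exp (l₂ * p * (tkhat - tk) / (2 * (p - 1))) - 1) ^ (p - 1) *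
          (Real.exp (l₂ * p * (tkhat - tk) / 2) - 1)) *
        (∫ τ in tk..tkhat, ‖d τ‖ ^ p) := by
  have hτ : 0 ≤ tkhat - tk := sub_nonneg.2 ht.le
  have hξc : ContinuousOn ξ (Icc tk tkhat) := fun t ht => (hξ t ht).continuousAt.continuousWithinAt
  have hε := integral_norm_sub_rpow_le (g := fun t => l₁ * ‖ξ t‖ + l₃ * ‖d t‖) h₂ hp ht.le hξc
    (fun x hx => (hξ x (Ico_subset_Icc_self hx)).hasDerivWithinAt) (by fun_prop)
    (fun _ _ => by positivity) (fun x hx => by linarith [hb x (Ico_subset_Icc_self hx)])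
  have hsplit := integral_mul_add_mul_rpow_le (p := p) (by linarith) ht.le h₁.le h₃.le hξc.norm
    hd.norm (fun _ _ => norm_nonneg _) (fun _ _ => norm_nonneg _)
  have hC : 0 ≤ ((exp (l₂ * p / (2 * (p - 1)) * (tkhat - tk)) - 1) / (l₂ * p / (2 * (p - 1)))) ^
      (p - 1) * ((exp (l₂ * p / 2 * (tkhat - tk)) - 1) / (l₂ * p / 2)) :=
    mul_nonneg (rpow_nonneg (exp_mul_sub_one_div_nonneg (by positivity) hτ) _)
      (exp_mul_sub_one_div_nonneg (by positivity) hτ)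
  rw [← two_rpow_mul_exp_integrals_eq hp h₂ hτ]
  calc _ ≤ _ := hε
    _ ≤ _ := mul_le_mul_of_nonneg_left hsplit hC
    _ = _ := by ring
end

section
/- Let m₁, m₂, κ, λ₂ > 0 with κ ≠ 2λ₂/m₁, and suppose χ : [t_k, ∞) → [0,∞) is differentiable with χ(t_k) = 0 and χ'(t) ≤ (1 + m₁ χ(t)/2)(κ + λ₂ χ(t)) for all t ≥ t_k. Then for any χ₀ > 0, if χ(t) = χ₀ for some t > t_k, then t - t_k ≥ τ*(χ₀), where τ*(χ₀) = (1/(λ₂ - m₁ κ/2)) · ln( (κ + λ₂ χ₀) / (κ (1 + m₁ χ₀/2)) ). -/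
/-!
Separation of variables: `τ*` is a primitive of `1 / ((1 + m₁ x / 2) (κ + λ₂ x))` on `[0, ∞)`
(partial fractions, the coefficient `λ₂ - m₁ κ / 2` coming from the difference of the two
logarithmic derivatives) with `τ*(0) = 0`. Along a solution of the differential inequality,
`τ* ∘ χ` therefore grows with slope at most `1`, so reaching `χ₀` from `0` takes time at least
`τ*(χ₀)`.
-/

open Set

theorem comp_sub_comp_le_of_deriv_le {f Φ χ χ' : ℝ → ℝ} {a b : ℝ} (hab : a ≤ b)
    (hχ : ∀ s ∈ Icc a b, HasDerivAt χ (χ' s) s)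
    (hf : ∀ s ∈ Icc a b, 0 < f (χ s))
    (hΦ : ∀ s ∈ Icc a b, HasDerivAt Φ (f (χ s))⁻¹ (χ s))
    (hle : ∀ s ∈ Icc a b, χ' s ≤ f (χ s)) :
    Φ (χ b) - Φ (χ a) ≤ b - a := by
  have hcomp : ∀ s ∈ Icc a b, HasDerivAt (Φ ∘ χ) ((f (χ s))⁻¹ * χ' s) s :=
    fun s hs => (hΦ s hs).comp s (hχ s hs)
  have hslope : ∀ s ∈ Icc a b, (f (χ s))⁻¹ * χ' s ≤ 1 := fun s hs =>
    (inv_mul_le_one₀ (hf s hs)).2 (hle s hs)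
  simpa only [one_mul, Function.comp_apply] using
    (convex_Icc a b).image_sub_le_mul_sub_of_deriv_le (C := 1)
    (fun s hs => (hcomp s hs).continuousAt.continuousWithinAt)
    (fun s hs => (hcomp s (interior_subset hs)).differentiableAt.differentiableWithinAt)
    (fun s hs => (hcomp s (interior_subset hs)).deriv ▸ hslope s (interior_subset hs))
    a (left_mem_Icc.2 hab) b (right_mem_Icc.2 hab) hab

noncomputable def tauStar (m₁ κ l₂ x : ℝ) : ℝ :=
  1 / (l₂ - m₁ * κ / 2) * Real.log ((κ + l₂ * x) / (κ * (1 + m₁ * x / 2)))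

theorem tauStar_zero {m₁ κ l₂ : ℝ} (hκ : κ ≠ 0) : tauStar m₁ κ l₂ 0 = 0 := by
  simp [tauStar, hκ]

theorem hasDerivAt_tauStar {m₁ κ l₂ x : ℝ} (hc : l₂ - m₁ * κ / 2 ≠ 0) (hκ : κ ≠ 0)
    (hA : 0 < κ + l₂ * x) (hB : 0 < 1 + m₁ * x / 2) :
    HasDerivAt (tauStar m₁ κ l₂) ((1 + m₁ * x / 2) * (κ + l₂ * x))⁻¹ x := by
  have hnum : HasDerivAt (fun y => κ + l₂ * y) l₂ x := by
    simpa using ((hasDerivAt_id x).const_mul l₂).const_add κ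
  have hden : HasDerivAt (fun y => κ * (1 + m₁ * y / 2)) (κ * (m₁ / 2)) x := by
    simpa [mul_div_assoc] using
      (((hasDerivAt_id x).const_mul m₁).div_const 2 |>.const_add 1).const_mul κ
  have hB' : κ * (1 + m₁ * x / 2) ≠ 0 := mul_ne_zero hκ hB.ne'
  have hquot := (hnum.fun_div hden hB').log (div_ne_zero hA.ne' hB')
  refine (hquot.const_mul (1 / (l₂ - m₁ * κ / 2))).congr_deriv ?_
  rw [show l₂ * (κ * (1 + m₁ * x / 2)) - (κ + l₂ * x) * (κ * (m₁ / 2)) =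
    κ * (l₂ - m₁ * κ / 2) by ring]
  generalize l₂ - m₁ * κ / 2 = c at hc ⊢
  field_simp [hA.ne', hB.ne']

theorem interevent_time_lower_bound_general (m₁ κ l₂ tk : ℝ)
    (hm₁ : 0 < m₁) (hκ : 0 < κ) (hl : 0 < l₂)
    (hne : κ ≠ 2 * l₂ / m₁)
    (χ χ' : ℝ → ℝ)
    (hnn : ∀ t ≥ tk, 0 ≤ χ t) (h0 : χ tk = 0)
    (hderiv : ∀ t ≥ tk, HasDerivAt χ (χ' t) t)
    (hineq : ∀ t ≥ tk, χ' t ≤ (1 + m₁ * χ t / 2) * (κ + l₂ * χ t)) :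
    ∀ χ₀ > (0:ℝ), ∀ t > tk, χ t = χ₀ →
      t - tk ≥ 1 / (l₂ - m₁ * κ / 2) *
        Real.log ((κ + l₂ * χ₀) / (κ * (1 + m₁ * χ₀ / 2))) := by
  rintro _ - t ht rfl
  have hc : l₂ - m₁ * κ / 2 ≠ 0 := fun h => hne (by field_simp; linarith)
  have hpos : ∀ s ∈ Icc tk t, 0 < κ + l₂ * χ s ∧ 0 < 1 + m₁ * χ s / 2 := fun s hs => by
    have := hnn s hs.1
    constructor <;> positivity
  have hcmp := comp_sub_comp_le_of_deriv_le (f := fun x => (1 + m₁ * x / 2) * (κ + l₂ * x))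
    (Φ := tauStar m₁ κ l₂) ht.le (fun s hs => hderiv s hs.1)
    (fun s hs => mul_pos (hpos s hs).2 (hpos s hs).1)
    (fun s hs => hasDerivAt_tauStar hc hκ.ne' (hpos s hs).1 (hpos s hs).2)
    (fun s hs => hineq s hs.1)
  rwa [h0, tauStar_zero hκ.ne', sub_zero] at hcmp

/-- Lower bound on the time for the normalized error `χ` to grow from `0` to `χ₀`
(generic case `κ ≠ 2λ₂/m₁`), via the comparison principle for
`χ' ≤ (1 + m₁χ/2)(κ + λ₂χ)`. -/
theorem interevent_time_lower_bound (m₁ m₂ κ l₂ tk : ℝ)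
    (hm₁ : 0 < m₁) (hm₂ : 0 < m₂) (hκ : 0 < κ) (hl : 0 < l₂)
    (hne : κ ≠ 2 * l₂ / m₁)
    (χ χ' : ℝ → ℝ)
    (hnn : ∀ t ≥ tk, 0 ≤ χ t) (h0 : χ tk = 0)
    (hderiv : ∀ t ≥ tk, HasDerivAt χ (χ' t) t)
    (hineq : ∀ t ≥ tk, χ' t ≤ (1 + m₁ * χ t / 2) * (κ + l₂ * χ t)) :
    ∀ χ₀ > (0:ℝ), ∀ t > tk, χ t = χ₀ →
      t - tk ≥ 1 / (l₂ - m₁ * κ / 2) *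
        Real.log ((κ + l₂ * χ₀) / (κ * (1 + m₁ * χ₀ / 2))) :=
  interevent_time_lower_bound_general m₁ κ l₂ tk hm₁ hκ hl hne χ χ' hnn h0 hderiv hineq
end

section
/- Let m₁, λ₂ > 0 and set κ = 2λ₂/m₁. Suppose χ : [t_k, ∞) → [0,∞) is differentiable with χ(t_k) = 0 and χ'(t) ≤ (1 + m₁ χ(t)/2)(κ + λ₂ χ(t)). Then for any χ₀ > 0, if χ(t) = χ₀ for some t > t_k, then t - t_k ≥ m₁ χ₀ / (λ₂ (2 + m₁ χ₀)). -/
/-! The substitution `u = χ / (1 + m₁χ/2)` linearises the Riccati-type bound: since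
`u' = χ' / (1 + m₁χ/2)²` and the right-hand side equals `κ (1 + m₁χ/2)²`, we get `u' ≤ κ`.
Integrating from `t_k`, where `u = 0`, gives `χ₀ / (1 + m₁χ₀/2) ≤ κ (t - t_k)`. -/

open Set

theorem hasDerivAt_div_one_add_mul {f : ℝ → ℝ} {f' c x : ℝ} (hf : HasDerivAt f f' x)
    (hx : 1 + c * f x ≠ 0) :
    HasDerivAt (fun y => f y / (1 + c * f y)) (f' / (1 + c * f x) ^ 2) x := by
  have h := hf.fun_div ((hf.const_mul c).const_add 1) hx
  rwa [show f' * (1 + c * f x) - f x * (c * f') = f' by ring] at h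

theorem div_one_add_mul_sub_le_of_deriv_le {f f' : ℝ → ℝ} {a b c K : ℝ} (hab : a ≤ b)
    (hpos : ∀ s ∈ Icc a b, 0 < 1 + c * f s)
    (hf : ∀ s ∈ Icc a b, HasDerivAt f (f' s) s)
    (hf' : ∀ s ∈ Ioo a b, f' s ≤ K * (1 + c * f s) ^ 2) :
    f b / (1 + c * f b) - f a / (1 + c * f a) ≤ K * (b - a) := by
  have hu : ∀ s ∈ Icc a b,
      HasDerivAt (fun y => f y / (1 + c * f y)) (f' s / (1 + c * f s) ^ 2) s :=
    fun s hs => hasDerivAt_div_one_add_mul (hf s hs) (hpos s hs).ne'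
  refine (convex_Icc a b).image_sub_le_mul_sub_of_deriv_le
    (fun s hs => (hu s hs).continuousAt.continuousWithinAt) ?_ ?_ a (left_mem_Icc.2 hab) b
    (right_mem_Icc.2 hab) hab
  · rw [interior_Icc]
    exact fun s hs => (hu s (Ioo_subset_Icc_self hs)).differentiableAt.differentiableWithinAt
  · rw [interior_Icc]
    intro s hs
    rw [(hu s (Ioo_subset_Icc_self hs)).deriv,
      div_le_iff₀ (pow_pos (hpos s (Ioo_subset_Icc_self hs)) 2)]
    exact hf' s hs

theorem one_add_mul_half_mul_eq (m l x : ℝ) (hm : m ≠ 0) :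
    (1 + m * x / 2) * (2 * l / m + l * x) = 2 * l / m * (1 + m / 2 * x) ^ 2 := by
  field_simp

/-- Degenerate case `κ = 2λ₂/m₁` of the inter-event time lower bound:
if `χ(t_k) = 0` and `χ' ≤ (1 + m₁χ/2)(κ + λ₂χ)`, then the time for `χ` to reach
`χ₀ > 0` is at least `m₁χ₀/(λ₂(2 + m₁χ₀))`. -/
theorem interevent_time_lower_bound_degenerate (m₁ l₂ tk : ℝ)
    (hm₁ : 0 < m₁) (hl : 0 < l₂)
    (χ χ' : ℝ → ℝ)
    (hnn : ∀ t ≥ tk, 0 ≤ χ t) (h0 : χ tk = 0)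
    (hderiv : ∀ t ≥ tk, HasDerivAt χ (χ' t) t)
    (hineq : ∀ t ≥ tk,
      χ' t ≤ (1 + m₁ * χ t / 2) * (2 * l₂ / m₁ + l₂ * χ t)) :
    ∀ χ₀ > (0:ℝ), ∀ t > tk, χ t = χ₀ →
      t - tk ≥ m₁ * χ₀ / (l₂ * (2 + m₁ * χ₀)) := by
  intro χ₀ hχ₀ t ht hχt
  have hkey := div_one_add_mul_sub_le_of_deriv_le (c := m₁ / 2) (K := 2 * l₂ / m₁) ht.le
    (fun s hs => by have := hnn s hs.1; positivity) (fun s hs => hderiv s hs.1)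
    (fun s hs => one_add_mul_half_mul_eq m₁ l₂ (χ s) hm₁.ne' ▸ hineq s hs.1.le)
  rw [hχt, h0] at hkey
  have hbound : m₁ * χ₀ / (l₂ * (2 + m₁ * χ₀)) = χ₀ / (1 + m₁ / 2 * χ₀) / (2 * l₂ / m₁) := by
    field_simp
  rw [ge_iff_le, hbound, div_le_iff₀' (by positivity)]
  simpa using hkey
end

section
/- Let ξ : [t_k, ∞) → ℝ^n be differentiable, ε(t) = ξ(t_k) - ξ(t), m₁, m₂ > 0, and define χ(t) = 2‖ε(t)‖ / (m₁‖ξ(t)‖ + m₂). Suppose ‖ξ'(t)‖ ≤ λ₁‖ξ(t)‖ + λ₂‖ε(t)‖ + λ₃‖d(t)‖ with ‖d(t)‖ ≤ ϵ, and set κ = max(2λ₁/m₁, 2λ₃ϵ/m₂). Then at every point t where χ is differentiable, χ'(t) ≤ (1 + m₁ χ(t)/2)(κ + λ₂ χ(t)). -/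
/-!
The error `ε = ξ(t_k) - ξ` and the weight `m₁‖ξ‖ + m₂` are both Lipschitz in `ξ` for the norm,
so `χ = 2‖ε‖ / (m₁‖ξ‖ + m₂)` satisfies a one-sided bound
`χ(y) - χ(x) ≤ (2 + m₁ χ(x)) / (m₁‖y‖ + m₂) · ‖y - x‖`. Along the trajectory, dividing by
`s - t` and letting `s ↓ t` bounds `χ'(t)` by `(2 + m₁ χ) / (m₁‖ξ‖ + m₂) · ‖ξ'‖`; this replaces the
quotient rule, which is unavailable where `‖ε‖` is not differentiable. The growth bound on `ξ'`
together with the choice of `κ` gives `‖ξ'‖ ≤ (κ + λ₂ χ)(m₁‖ξ‖ + m₂) / 2`, and the two combine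
into the claim.
-/

open Set Filter Topology

variable {E : Type*} [NormedAddCommGroup E]

theorem HasDerivWithinAt.le_mul_norm_of_sub_le_mul_norm_sub [NormedSpace ℝ E]
    {f : ℝ → ℝ} {g : ℝ → E} {K : ℝ → ℝ} {c t : ℝ} {g' : E} (hf : HasDerivWithinAt f c (Ioi t) t)
    (hg : HasDerivWithinAt g g' (Ioi t) t) (hK : ContinuousWithinAt K (Ioi t) t)
    (hle : ∀ᶠ s in 𝓝[>] t, f s - f t ≤ K s * ‖g s - g t‖) : c ≤ K t * ‖g'‖ := by
  have hf' := (hasDerivWithinAt_iff_tendsto_slope' self_notMem_Ioi).mp hf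
  have hg' := (hasDerivWithinAt_iff_tendsto_slope' self_notMem_Ioi).mp hg
  refine le_of_tendsto_of_tendsto hf' (hK.tendsto.mul hg'.norm) ?_
  filter_upwards [hle, self_mem_nhdsWithin] with s hs hts
  have hst : 0 < s - t := sub_pos.mpr hts
  rw [slope_def_field, slope_def_module, norm_smul, Real.norm_eq_abs, abs_inv,
    abs_of_pos hst, div_le_iff₀ hst]
  calc f s - f t ≤ K s * ‖g s - g t‖ := hs
    _ = K s * ((s - t)⁻¹ * ‖g s - g t‖) * (s - t) := by field_simp

/-- The paper's `χ`, as a function of the state `x`, with `x₀ = ξ(t_k)`. -/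
noncomputable def normalizedError (x₀ : E) (m₁ m₂ : ℝ) (x : E) : ℝ :=
  2 * ‖x₀ - x‖ / (m₁ * ‖x‖ + m₂)

theorem normalizedError_sub_le {m₁ m₂ : ℝ} (hm₁ : 0 ≤ m₁) (hm₂ : 0 < m₂) (x₀ x y : E) :
    normalizedError x₀ m₁ m₂ y - normalizedError x₀ m₁ m₂ x ≤
      (2 + m₁ * normalizedError x₀ m₁ m₂ x) / (m₁ * ‖y‖ + m₂) * ‖y - x‖ := by
  have hDx : 0 < m₁ * ‖x‖ + m₂ := by positivity
  have hDy : 0 < m₁ * ‖y‖ + m₂ := by positivity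
  have hε : ‖x₀ - y‖ - ‖x₀ - x‖ ≤ ‖y - x‖ := by
    simpa only [sub_sub_sub_cancel_left, norm_sub_rev x y] using norm_sub_norm_le (x₀ - y) (x₀ - x)
  have hx : ‖x‖ - ‖y‖ ≤ ‖y - x‖ := by
    simpa only [norm_sub_rev x y] using norm_sub_norm_le x y
  unfold normalizedError
  rw [div_sub_div _ _ hDy.ne' hDx.ne', div_le_iff₀ (mul_pos hDy hDx)]
  field_simp
  nlinarith [mul_le_mul_of_nonneg_left hx hm₁, norm_nonneg (x₀ - x), norm_nonneg (y - x)]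

theorem normalizedError_rightDeriv_le [NormedSpace ℝ E] {ξ : ℝ → E} {ξ' x₀ : E}
    {m₁ m₂ c t : ℝ} (hm₁ : 0 ≤ m₁) (hm₂ : 0 < m₂) (hξ : HasDerivWithinAt ξ ξ' (Ioi t) t)
    (hc : HasDerivWithinAt (fun s ↦ normalizedError x₀ m₁ m₂ (ξ s)) c (Ioi t) t) :
    c ≤ (2 + m₁ * normalizedError x₀ m₁ m₂ (ξ t)) / (m₁ * ‖ξ t‖ + m₂) * ‖ξ'‖ := by
  refine hc.le_mul_norm_of_sub_le_mul_norm_sub hξ ?_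
    (Eventually.of_forall fun s ↦ normalizedError_sub_le hm₁ hm₂ x₀ (ξ t) (ξ s))
  have hD : 0 < m₁ * ‖ξ t‖ + m₂ := by positivity
  exact continuousWithinAt_const.div
    (continuousWithinAt_const.mul hξ.continuousWithinAt.norm |>.add continuousWithinAt_const)
    hD.ne'

theorem normalized_error_differential_inequality_general (n : ℕ)
    (m₁ m₂ l₁ l₂ l₃ ϵ κ tk : ℝ)
    (hm₁ : 0 < m₁) (hm₂ : 0 < m₂)
    (h₃ : 0 ≤ l₃)
    (hκ : κ = max (2 * l₁ / m₁) (2 * l₃ * ϵ / m₂))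
    (ξ ξ' d : ℝ → EuclideanSpace ℝ (Fin n))
    (hderiv : ∀ t ≥ tk, HasDerivAt ξ (ξ' t) t)
    (hb : ∀ t ≥ tk, ‖ξ' t‖ ≤ l₁ * ‖ξ t‖ + l₂ * ‖ξ tk - ξ t‖ + l₃ * ‖d t‖)
    (hd : ∀ t ≥ tk, ‖d t‖ ≤ ϵ) :
    ∀ t ≥ tk, ∀ c : ℝ,
      HasDerivAt (fun s => 2 * ‖ξ tk - ξ s‖ / (m₁ * ‖ξ s‖ + m₂)) c t →
        c ≤ (1 + m₁ * (2 * ‖ξ tk - ξ t‖ / (m₁ * ‖ξ t‖ + m₂)) / 2) *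
            (κ + l₂ * (2 * ‖ξ tk - ξ t‖ / (m₁ * ‖ξ t‖ + m₂))) := by
  intro t ht c hc
  set χ := normalizedError (ξ tk) m₁ m₂ (ξ t)
  have hχ : 0 ≤ χ := by simp only [χ, normalizedError]; positivity
  have hε : ‖ξ tk - ξ t‖ = χ * (m₁ * ‖ξ t‖ + m₂) / 2 := by
    simp only [χ, normalizedError]; field_simp
  have hκ₁ : 2 * l₁ ≤ κ * m₁ := (div_le_iff₀ hm₁).mp (hκ ▸ le_max_left _ _)
  have hκ₃ : 2 * l₃ * ϵ ≤ κ * m₂ := (div_le_iff₀ hm₂).mp (hκ ▸ le_max_right _ _)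
  have hξ' : ‖ξ' t‖ ≤ (κ + l₂ * χ) * (m₁ * ‖ξ t‖ + m₂) / 2 := by
    have hl₁ := mul_le_mul_of_nonneg_right hκ₁ (norm_nonneg (ξ t))
    have hl₃ := mul_le_mul_of_nonneg_left (hd t ht) h₃
    have hgrowth := hb t ht
    rw [hε] at hgrowth
    linarith
  calc c ≤ (2 + m₁ * χ) / (m₁ * ‖ξ t‖ + m₂) * ‖ξ' t‖ :=
        normalizedError_rightDeriv_le hm₁.le hm₂ (hderiv t ht).hasDerivWithinAt
          hc.hasDerivWithinAt
    _ ≤ (2 + m₁ * χ) / (m₁ * ‖ξ t‖ + m₂) * ((κ + l₂ * χ) * (m₁ * ‖ξ t‖ + m₂) / 2) := by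
        gcongr
    _ = (1 + m₁ * χ / 2) * (κ + l₂ * χ) := by field_simp

/-- Differential inequality for the normalized error
`χ(t) = 2‖ε(t)‖/(m₁‖ξ(t)‖ + m₂)`: wherever `χ` is differentiable,
`χ' ≤ (1 + m₁χ/2)(κ + λ₂χ)` with `κ = max(2λ₁/m₁, 2λ₃ϵ/m₂)`. -/
theorem normalized_error_differential_inequality (n : ℕ)
    (m₁ m₂ l₁ l₂ l₃ ϵ κ tk : ℝ)
    (hm₁ : 0 < m₁) (hm₂ : 0 < m₂)
    (h₁ : 0 ≤ l₁) (h₂ : 0 ≤ l₂) (h₃ : 0 ≤ l₃) (hϵ : 0 ≤ ϵ)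
    (hκ : κ = max (2 * l₁ / m₁) (2 * l₃ * ϵ / m₂))
    (ξ ξ' d : ℝ → EuclideanSpace ℝ (Fin n))
    (hderiv : ∀ t ≥ tk, HasDerivAt ξ (ξ' t) t)
    (hb : ∀ t ≥ tk, ‖ξ' t‖ ≤ l₁ * ‖ξ t‖ + l₂ * ‖ξ tk - ξ t‖ + l₃ * ‖d t‖)
    (hd : ∀ t ≥ tk, ‖d t‖ ≤ ϵ) :
    ∀ t ≥ tk, ∀ c : ℝ,
      HasDerivAt (fun s => 2 * ‖ξ tk - ξ s‖ / (m₁ * ‖ξ s‖ + m₂)) c t →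
        c ≤ (1 + m₁ * (2 * ‖ξ tk - ξ t‖ / (m₁ * ‖ξ t‖ + m₂)) / 2) *
            (κ + l₂ * (2 * ‖ξ tk - ξ t‖ / (m₁ * ‖ξ t‖ + m₂))) :=
  normalized_error_differential_inequality_general n m₁ m₂ l₁ l₂ l₃ ϵ κ tk hm₁ hm₂ h₃ hκ ξ ξ' d
    hderiv hb hd
end
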